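/- arXiv:0805.2235 — 2 statements merged into one kernel-verified Lean document; each statement's English description precedes it below -/
import Mathlib

section
/- If a domain G ⊆ ℂ carries a regular conformal metric with Gauss curvature bounded above by -1, then every entire function f : ℂ → G is constant. -/
/-- The Laplacian of `u : ℂ → ℝ` at `z`: sum of second derivatives in the
real and imaginary coordinate directions. -/
noncomputable def lap (u : ℂ → ℝ) (z : ℂ) : ℝ :=
  iteratedDeriv 2 (fun t : ℝ => u (z + (t : ℂ))) 0 +
    iteratedDeriv 2 (fun t : ℝ => u (z + (t : ℂ) * Complex.I)) 0

open Complex Filter Topology Set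

/-- convenience -/
lemma iteratedDeriv_two (g : ℝ → ℝ) : iteratedDeriv 2 g = deriv (deriv g) := by
  rw [show (2:ℕ) = 1+1 from rfl, iteratedDeriv_succ, iteratedDeriv_one]

/-- Second derivative of `u ∘ F` along a curve. -/
lemma key_second_deriv (u : ℂ → ℝ) (F F' : ℝ → ℂ) (w' : ℂ)
    (hF : ∀ᶠ t in 𝓝 (0:ℝ), HasDerivAt F (F' t) t)
    (hF' : HasDerivAt F' w' 0)
    (hu : ContDiffAt ℝ 2 u (F 0)) :
    iteratedDeriv 2 (fun t => u (F t)) 0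
      = fderiv ℝ (fderiv ℝ u) (F 0) (F' 0) (F' 0) + fderiv ℝ u (F 0) w' := by
  have hF00 : HasDerivAt F (F' 0) 0 := hF.self_of_nhds
  have hF0 : ContinuousAt F 0 := hF00.continuousAt
  have huev : ∀ᶠ y in 𝓝 (F 0), DifferentiableAt ℝ u y :=
    (hu.eventually (by simp)).mono fun y hy => hy.differentiableAt two_ne_zero
  have hFd : ∀ᶠ t in 𝓝 (0:ℝ), DifferentiableAt ℝ u (F t) := hF0.eventually huev
  have E1 : ∀ᶠ t in 𝓝 (0:ℝ), HasDerivAt (fun s => u (F s)) (fderiv ℝ u (F t) (F' t)) t := by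
    filter_upwards [hF, hFd] with t h1 h2
    exact h2.hasFDerivAt.comp_hasDerivAt t h1
  have hd1 : deriv (fun s => u (F s)) =ᶠ[𝓝 (0:ℝ)] fun t => fderiv ℝ u (F t) (F' t) :=
    E1.mono fun t h => h.deriv
  have h1 : DifferentiableAt ℝ (fderiv ℝ u) (F 0) :=
    (hu.fderiv_right (m := 1) le_rfl).differentiableAt one_ne_zero
  have hG : HasDerivAt (fun t => fderiv ℝ u (F t)) ((fderiv ℝ (fderiv ℝ u) (F 0)) (F' 0)) 0 :=
    h1.hasFDerivAt.comp_hasDerivAt 0 hF00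
  have E2 : HasDerivAt (fun t => fderiv ℝ u (F t) (F' t))
      ((fderiv ℝ (fderiv ℝ u) (F 0)) (F' 0) (F' 0) + fderiv ℝ u (F 0) w') 0 :=
    hG.clm_apply hF'
  rw [show (2:ℕ) = 1+1 from rfl, iteratedDeriv_succ, iteratedDeriv_one, hd1.deriv_eq]
  exact E2.deriv

lemma lineDeriv2 (u : ℂ → ℝ) (z v : ℂ) (hu : ContDiffAt ℝ 2 u z) :
    iteratedDeriv 2 (fun t : ℝ => u (z + t • v)) 0 = fderiv ℝ (fderiv ℝ u) z v v := by
  have hline : ∀ t : ℝ, HasDerivAt (fun s : ℝ => z + s • v) v t := by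
    intro t
    simpa using ((hasDerivAt_id t).smul_const v).const_add z
  have h := key_second_deriv u (fun s : ℝ => z + s • v) (fun _ => v) 0
    (Eventually.of_forall hline) (hasDerivAt_const 0 v) (by simpa using hu)
  simpa using h

lemma lap_eq_sndFDeriv (u : ℂ → ℝ) (z : ℂ) (hu : ContDiffAt ℝ 2 u z) :
    lap u z = fderiv ℝ (fderiv ℝ u) z 1 1
      + fderiv ℝ (fderiv ℝ u) z Complex.I Complex.I := by
  have h1 : (fun t : ℝ => u (z + (t:ℂ))) = fun t : ℝ => u (z + t • (1:ℂ)) := by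
    funext t; simp [Complex.real_smul]
  have h2 : (fun t : ℝ => u (z + (t:ℂ) * Complex.I)) = fun t : ℝ => u (z + t • Complex.I) := by
    funext t; simp [Complex.real_smul]
  rw [lap, h1, h2, lineDeriv2 u z 1 hu, lineDeriv2 u z Complex.I hu]

lemma clm2_expand (B : ℂ →L[ℝ] ℂ →L[ℝ] ℝ) (x y : ℂ) :
    B x y = x.re * y.re * B 1 1 + x.re * y.im * B 1 Complex.I
      + x.im * y.re * B Complex.I 1 + x.im * y.im * B Complex.I Complex.I := by
  have h : ∀ v : ℂ, ∀ L : ℂ →L[ℝ] ℝ, L v = v.re * L 1 + v.im * L Complex.I := by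
    intro v L
    have hv : v = v.re • (1:ℂ) + v.im • Complex.I := by simp [Complex.real_smul]
    nth_rewrite 1 [hv]
    rw [map_add, map_smul, map_smul, smul_eq_mul, smul_eq_mul]
  have h2 : ∀ y : ℂ, B x y = x.re * B 1 y + x.im * B Complex.I y := by
    intro y
    have hx : x = x.re • (1:ℂ) + x.im • Complex.I := by simp [Complex.real_smul]
    nth_rewrite 1 [hx]
    rw [map_add, map_smul, map_smul, ContinuousLinearMap.add_apply,
      ContinuousLinearMap.smul_apply, ContinuousLinearMap.smul_apply, smul_eq_mul, smul_eq_mul]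
  rw [h y (B x), h2 1, h2 Complex.I]
  ring

lemma bilin_sum (B : ℂ →L[ℝ] ℂ →L[ℝ] ℝ) (w : ℂ) :
    B w w + B (Complex.I • w) (Complex.I • w)
      = Complex.normSq w * (B 1 1 + B Complex.I Complex.I) := by
  rw [clm2_expand B w w, clm2_expand B (Complex.I • w) (Complex.I • w)]
  simp only [smul_eq_mul, Complex.mul_re, Complex.mul_im, Complex.I_re, Complex.I_im,
    Complex.normSq_apply]
  ring

lemma lap_comp_holo (u : ℂ → ℝ) (f : ℂ → ℂ) (z : ℂ)
    (hf : ∀ᶠ w in 𝓝 z, DifferentiableAt ℂ f w) (hu : ContDiffAt ℝ 2 u (f z)) :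
    lap (fun w => u (f w)) z = Complex.normSq (deriv f z) * lap u (f z) := by
  obtain ⟨s, hsmem, hsdiff⟩ := hf.exists_mem
  have hA : AnalyticAt ℂ f z :=
    DifferentiableOn.analyticAt (fun x hx => (hsdiff x hx).differentiableWithinAt) hsmem
  have hderiv_eq : deriv f = fun w => (ContinuousLinearMap.apply ℂ ℂ 1) (fderiv ℂ f w) :=
    funext fun w => fderiv_apply_one_eq_deriv.symm
  have hd2 : DifferentiableAt ℂ (deriv f) z := by
    rw [hderiv_eq]
    exact ((ContinuousLinearMap.apply ℂ ℂ (1:ℂ)).differentiable.differentiableAt).comp z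
      hA.fderiv.differentiableAt
  have main : ∀ v : ℂ, iteratedDeriv 2 (fun t : ℝ => u (f (z + t • v))) 0
      = fderiv ℝ (fderiv ℝ u) (f z) (v • deriv f z) (v • deriv f z)
        + fderiv ℝ u (f z) (v • (v • deriv (deriv f) z)) := by
    intro v
    have hline : ∀ t : ℝ, HasDerivAt (fun s : ℝ => z + s • v) v t := by
      intro t; simpa using ((hasDerivAt_id t).smul_const v).const_add z
    have h00 : z + (0:ℝ) • v = z := by simp
    have hcont : Tendsto (fun t : ℝ => z + t • v) (𝓝 0) (𝓝 z) := by
      have := (hline 0).continuousAt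
      rwa [ContinuousAt, h00] at this
    have hev : ∀ᶠ t in 𝓝 (0:ℝ), DifferentiableAt ℂ f (z + t • v) := hcont.eventually hf
    have hF : ∀ᶠ t in 𝓝 (0:ℝ),
        HasDerivAt (fun s : ℝ => f (z + s • v)) (v • deriv f (z + t • v)) t := by
      filter_upwards [hev] with t ht
      exact ht.hasDerivAt.scomp t (hline t)
    have hF' : HasDerivAt (fun t : ℝ => v • deriv f (z + t • v)) (v • (v • deriv (deriv f) z)) 0 := by
      have h1 : HasDerivAt (fun t : ℝ => deriv f (z + t • v)) (v • deriv (deriv f) z) 0 := by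
        have := (hd2.hasDerivAt.scomp_of_eq (0:ℝ) (hline 0) h00.symm)
        exact this
      exact h1.const_smul v
    have h := key_second_deriv u (fun s : ℝ => f (z + s • v)) _ _ hF hF'
      (by simpa only [h00] using hu)
    simpa only [h00] using h
  have h1 : (fun t : ℝ => u (f (z + (t:ℂ)))) = fun t : ℝ => u (f (z + t • (1:ℂ))) := by
    funext t; simp [Complex.real_smul]
  have h2 : (fun t : ℝ => u (f (z + (t:ℂ) * Complex.I)))
      = fun t : ℝ => u (f (z + t • Complex.I)) := by
    funext t; simp [Complex.real_smul]
  rw [show lap (fun w => u (f w)) z = iteratedDeriv 2 (fun t : ℝ => u (f (z + (t:ℂ)))) 0 +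
    iteratedDeriv 2 (fun t : ℝ => u (f (z + (t:ℂ) * Complex.I))) 0 from rfl, h1, h2,
    main 1, main Complex.I]
  have hII : Complex.I • (Complex.I • deriv (deriv f) z) = -(deriv (deriv f) z) := by
    rw [smul_smul, Complex.I_mul_I, neg_one_smul]
  rw [hII, map_neg]
  simp only [one_smul]
  rw [lap_eq_sndFDeriv u (f z) hu]
  linarith [bilin_sum (fderiv ℝ (fderiv ℝ u) (f z)) (deriv f z)]

lemma lap_add (u v : ℂ → ℝ) (z : ℂ) (hu : ContDiffAt ℝ 2 u z) (hv : ContDiffAt ℝ 2 v z) :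
    lap (fun w => u w + v w) z = lap u z + lap v z := by
  have hsum : ContDiffAt ℝ 2 (fun w => u w + v w) z := hu.add hv
  rw [lap_eq_sndFDeriv _ _ hsum, lap_eq_sndFDeriv _ _ hu, lap_eq_sndFDeriv _ _ hv]
  have hD1 : fderiv ℝ (fun w => u w + v w) =ᶠ[𝓝 z] fun w => fderiv ℝ u w + fderiv ℝ v w := by
    filter_upwards [hu.eventually (by simp), hv.eventually (by simp)] with w h1 h2
    exact fderiv_fun_add (h1.differentiableAt two_ne_zero) (h2.differentiableAt two_ne_zero)
  have hdu : DifferentiableAt ℝ (fderiv ℝ u) z :=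
    (hu.fderiv_right (m := 1) le_rfl).differentiableAt one_ne_zero
  have hdv : DifferentiableAt ℝ (fderiv ℝ v) z :=
    (hv.fderiv_right (m := 1) le_rfl).differentiableAt one_ne_zero
  have h2 : fderiv ℝ (fderiv ℝ (fun w => u w + v w)) z
      = fderiv ℝ (fderiv ℝ u) z + fderiv ℝ (fderiv ℝ v) z := by
    rw [hD1.fderiv_eq, fderiv_fun_add hdu hdv]
  rw [h2]
  simp only [ContinuousLinearMap.add_apply]
  ring

lemma lap_congr {u v : ℂ → ℝ} {z : ℂ} (h : u =ᶠ[𝓝 z] v) : lap u z = lap v z := by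
  have k : ∀ g : ℝ → ℂ, Continuous g → g 0 = z →
      iteratedDeriv 2 (fun t => u (g t)) 0 = iteratedDeriv 2 (fun t => v (g t)) 0 := by
    intro g hg hg0
    have ht : Tendsto g (𝓝 0) (𝓝 z) := by
      have := hg.continuousAt (x := (0:ℝ)); rwa [ContinuousAt, hg0] at this
    have he : (fun t => u (g t)) =ᶠ[𝓝 (0:ℝ)] fun t => v (g t) :=
      (ht.eventually h).mono fun t ht => ht
    rw [show (2:ℕ) = 1+1 from rfl, iteratedDeriv_succ, iteratedDeriv_one,
      iteratedDeriv_succ, iteratedDeriv_one, (he.deriv).deriv_eq]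
  rw [lap, lap, k (fun t : ℝ => z + (t:ℂ)) (by continuity) (by simp),
    k (fun t : ℝ => z + (t:ℂ) * Complex.I) (by continuity) (by simp)]

lemma lap_re (w : ℂ) : lap (fun z : ℂ => z.re) w = 0 := by
  have h1 : (fun t : ℝ => (w + (t:ℂ)).re) = fun t : ℝ => w.re + t := by
    funext t; simp
  have h2 : (fun t : ℝ => (w + (t:ℂ) * Complex.I).re) = fun _ : ℝ => w.re := by
    funext t; simp
  have e1 : iteratedDeriv 2 (fun t : ℝ => w.re + t) 0 = 0 := by
    have hd : deriv (fun t : ℝ => w.re + t) = fun _ => (1:ℝ) := by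
      funext t; simpa using ((hasDerivAt_id t).const_add w.re).deriv
    rw [show (2:ℕ) = 1+1 from rfl, iteratedDeriv_succ, iteratedDeriv_one, hd]
    simp
  have e2 : iteratedDeriv 2 (fun _ : ℝ => w.re) 0 = 0 := by
    rw [show (2:ℕ) = 1+1 from rfl, iteratedDeriv_succ, iteratedDeriv_one]
    simp
  rw [lap, h1, h2, e1, e2, add_zero]

lemma log_line_deriv2 (A b : ℝ) (hs : 0 < A - b^2) :
    iteratedDeriv 2 (fun t : ℝ => Real.log (A - (b+t)^2)) 0
      = -2/(A - b^2) - 4*b^2/(A - b^2)^2 := by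
  have hφ : ∀ t : ℝ, HasDerivAt (fun t : ℝ => A - (b+t)^2) (-(2*(b+t))) t := by
    intro t
    have h1 : HasDerivAt (fun t : ℝ => (b+t)^2) (2*(b+t)) t := by
      have := (((hasDerivAt_id t).const_add b).fun_pow 2)
      simpa using this
    simpa using h1.const_sub A
  have h0 : (0:ℝ) < A - (b+0)^2 := by simpa using hs
  have hpos : ∀ᶠ t in 𝓝 (0:ℝ), 0 < A - (b+t)^2 :=
    (hφ 0).continuousAt.eventually (eventually_gt_nhds h0)
  have E1 : ∀ᶠ t in 𝓝 (0:ℝ), HasDerivAt (fun t : ℝ => Real.log (A - (b+t)^2))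
      (-(2*(b+t)) / (A - (b+t)^2)) t := by
    filter_upwards [hpos] with t ht
    exact (hφ t).log (ne_of_gt ht)
  have hd1 : deriv (fun t : ℝ => Real.log (A - (b+t)^2))
      =ᶠ[𝓝 (0:ℝ)] fun t => -(2*(b+t)) / (A - (b+t)^2) :=
    E1.mono fun t h => h.deriv
  have hnum : HasDerivAt (fun t : ℝ => -(2*(b+t))) (-2) 0 := by
    simpa using ((hasDerivAt_id (0:ℝ)).const_add b).const_mul (-2)
  have E2 : HasDerivAt (fun t : ℝ => -(2*(b+t)) / (A - (b+t)^2))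
      ((-2 * (A - (b+0)^2) - (-(2*(b+0))) * (-(2*(b+0)))) / (A - (b+0)^2)^2) 0 :=
    hnum.div (hφ 0) (ne_of_gt h0)
  rw [iteratedDeriv_two, hd1.deriv_eq, E2.deriv]
  have hne : A - b^2 ≠ 0 := ne_of_gt hs
  field_simp
  ring

lemma iteratedDeriv2_nonpos_of_isLocalMax {g : ℝ → ℝ} (hg : ContDiffAt ℝ 2 g 0)
    (hm : IsLocalMax g 0) : iteratedDeriv 2 g 0 ≤ 0 := by
  by_contra hlt
  push_neg at hlt
  rw [iteratedDeriv_two] at hlt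
  have hderiv0 : deriv g 0 = 0 := hm.deriv_eq_zero
  have hdiff : DifferentiableAt ℝ (deriv g) 0 := by
    have h1 : ContDiffAt ℝ 1 (fderiv ℝ g) 0 := hg.fderiv_right le_rfl
    have h2 : deriv g = fun y => (ContinuousLinearMap.apply ℝ ℝ 1) (fderiv ℝ g y) :=
      funext fun y => fderiv_apply_one_eq_deriv.symm
    rw [h2]
    exact ((ContinuousLinearMap.apply ℝ ℝ (1:ℝ)).differentiable.differentiableAt).comp 0
      (h1.differentiableAt one_ne_zero)
  have hslope : Tendsto (slope (deriv g) 0) (𝓝[≠] 0) (𝓝 (deriv (deriv g) 0)) :=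
    hasDerivAt_iff_tendsto_slope.1 hdiff.hasDerivAt
  have h1 : ∀ᶠ t in 𝓝[≠] (0:ℝ), 0 < slope (deriv g) 0 t :=
    hslope.eventually (eventually_gt_nhds hlt)
  have hmono : 𝓝[<] (0:ℝ) ≤ 𝓝[≠] (0:ℝ) :=
    nhdsWithin_mono 0 (fun x hx => ne_of_lt hx)
  have hleft : ∀ᶠ t in 𝓝[<] (0:ℝ), deriv g t < 0 := by
    filter_upwards [hmono h1, self_mem_nhdsWithin] with t ht ht0
    rw [slope_def_field, hderiv0, sub_zero, sub_zero] at ht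
    rcases div_pos_iff.1 ht with ⟨_, h⟩ | ⟨h, _⟩
    · exact absurd ht0 (not_lt.2 h.le)
    · exact h
  have hdiffg : ∀ᶠ t in 𝓝 (0:ℝ), DifferentiableAt ℝ g t :=
    (hg.eventually (by simp)).mono fun y hy => hy.differentiableAt two_ne_zero
  have hcomb : ∀ᶠ t in 𝓝[<] (0:ℝ),
      deriv g t < 0 ∧ DifferentiableAt ℝ g t ∧ g t ≤ g 0 := by
    filter_upwards [hleft, nhdsWithin_le_nhds hdiffg, nhdsWithin_le_nhds hm] with t h1 h2 h3
    exact ⟨h1, h2, h3⟩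
  obtain ⟨l, hl, hsub⟩ := mem_nhdsLT_iff_exists_Ioo_subset.1 hcomb
  have hl0 : l < 0 := hl
  set m := l/2 with hm_def
  have hm_mem : m ∈ Ioo l (0:ℝ) := ⟨by linarith, by linarith⟩
  have hdiff_Icc : ∀ x ∈ Icc m (0:ℝ), DifferentiableAt ℝ g x := by
    intro x hx
    rcases eq_or_lt_of_le hx.2 with h | h
    · rw [h]; exact hg.differentiableAt two_ne_zero
    · exact (hsub ⟨lt_of_lt_of_le (by linarith) hx.1, h⟩).2.1
  have hanti : StrictAntiOn g (Icc m 0) := by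
    apply strictAntiOn_of_deriv_neg (convex_Icc m 0)
    · exact fun x hx => (hdiff_Icc x hx).continuousAt.continuousWithinAt
    · intro x hx
      rw [interior_Icc] at hx
      have hxm : m < x := hx.1
      exact (hsub ⟨by rw [hm_def] at hxm; linarith, hx.2⟩).1
  have := hanti ⟨le_refl m, by linarith⟩ ⟨by linarith, le_refl 0⟩ (by linarith : m < 0)
  have hgm : g m ≤ g 0 := (hsub hm_mem).2.2
  linarith

lemma lap_nonpos_of_isLocalMax {h : ℂ → ℝ} {z : ℂ} (hh : ContDiffAt ℝ 2 h z)
    (hm : IsLocalMax h z) : lap h z ≤ 0 := by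
  have main : ∀ g : ℝ → ℂ, ContDiff ℝ 2 g → g 0 = z →
      iteratedDeriv 2 (fun t => h (g t)) 0 ≤ 0 := by
    intro g hg hg0
    have hc : ContDiffAt ℝ 2 (fun t => h (g t)) 0 :=
      (hg0 ▸ hh).comp 0 hg.contDiffAt
    have ht : Tendsto g (𝓝 0) (𝓝 z) := by
      have := hg.continuous.continuousAt (x := (0:ℝ))
      rwa [ContinuousAt, hg0] at this
    have hmax : IsLocalMax (fun t => h (g t)) 0 := by
      have := ht.eventually hm
      simpa [IsLocalMax, IsMaxFilter, hg0] using this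
    exact iteratedDeriv2_nonpos_of_isLocalMax hc hmax
  have hg1 : ContDiff ℝ 2 (fun t : ℝ => z + (t:ℂ)) :=
    contDiff_const.add Complex.ofRealCLM.contDiff
  have hg2 : ContDiff ℝ 2 (fun t : ℝ => z + (t:ℂ) * Complex.I) :=
    contDiff_const.add (Complex.ofRealCLM.contDiff.mul contDiff_const)
  have t1 := main _ hg1 (by simp)
  have t2 := main _ hg2 (by simp)
  rw [lap]
  linarith

set_option maxHeartbeats 2000000 in
/-- If a domain `G` carries a regular conformal metric with curvature `≤ -1`,
then every entire function with values in `G` is constant. -/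
theorem entire_into_neg_curved_is_constant (G : Set ℂ) (hG : IsOpen G)
    (hGc : IsConnected G) (lam : ℂ → ℝ) (hpos : ∀ z ∈ G, 0 < lam z)
    (hC2 : ContDiffOn ℝ 2 lam G)
    (hcurv : ∀ z ∈ G, (lam z) ^ 2 ≤ lap (fun w => Real.log (lam w)) z)
    (f : ℂ → ℂ) (hf : Differentiable ℂ f) (hmaps : ∀ z, f z ∈ G) :
    ∃ c : ℂ, ∀ z, f z = c := by
  by_cases hz : ∀ x, deriv f x = 0
  · refine ⟨f 0, fun z => ?_⟩
    apply is_const_of_fderiv_eq_zero hf ?_ z 0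
    intro x
    have h1 : fderiv ℂ f x 1 = 0 := by rw [fderiv_apply_one_eq_deriv]; exact hz x
    ext
    simpa using h1
  push_neg at hz
  obtain ⟨z₀, hz₀⟩ := hz
  exfalso
  have hd_entire : Differentiable ℂ (deriv f) := by
    intro z
    have h2 : deriv f = fun w => (ContinuousLinearMap.apply ℂ ℂ 1) (fderiv ℂ f w) :=
      funext fun w => fderiv_apply_one_eq_deriv.symm
    rw [h2]
    exact ((ContinuousLinearMap.apply ℂ ℂ (1:ℂ)).differentiable.differentiableAt).comp z
      (hf.analyticAt z).fderiv.differentiableAt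
  have claim : ∀ R : ℝ, 0 < R → ∀ x ∈ Metric.closedBall z₀ R,
      lam (f x) * ‖deriv f x‖ * (R^2 - Complex.normSq (x - z₀)) ≤ 2*R := by
    intro R hR
    set W : ℂ → ℝ :=
      fun x => lam (f x) * ‖deriv f x‖ * (R^2 - Complex.normSq (x - z₀)) with hW_def
    have hWc : ContinuousOn W (Metric.closedBall z₀ R) := by
      apply ContinuousOn.mul
      apply ContinuousOn.mul
      · exact hC2.continuousOn.comp hf.continuous.continuousOn (fun x _ => hmaps x)
      · exact (continuous_norm.comp hd_entire.continuous).continuousOn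
      · exact (continuous_const.sub
          (Complex.continuous_normSq.comp (continuous_id.sub continuous_const))).continuousOn
    obtain ⟨zm, hzm_mem, hzm_max⟩ := (isCompact_closedBall z₀ R).exists_isMaxOn
      ⟨z₀, Metric.mem_closedBall_self hR.le⟩ hWc
    intro x hx
    have hxle : W x ≤ W zm := hzm_max hx
    suffices hWm : W zm ≤ 2*R by exact le_trans hxle hWm
    by_contra hgt
    push_neg at hgt
    have h2R : 0 < 2*R := by linarith
    have hlam_m : 0 < lam (f zm) := hpos _ (hmaps zm)
    have habs_nonneg : 0 ≤ ‖deriv f zm‖ := norm_nonneg _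
    have hWm_pos : 0 < W zm := lt_trans h2R hgt
    have hs_pos : 0 < R^2 - Complex.normSq (zm - z₀) := by
      by_contra hns
      push_neg at hns
      have : W zm ≤ 0 :=
        mul_nonpos_of_nonneg_of_nonpos (mul_nonneg hlam_m.le habs_nonneg) hns
      linarith
    have hfm_ne : deriv f zm ≠ 0 := by
      intro h0
      rw [hW_def] at hWm_pos
      simp only [h0, norm_zero, mul_zero, zero_mul] at hWm_pos
      exact lt_irrefl 0 hWm_pos
    have habs_pos : 0 < ‖deriv f zm‖ := norm_pos_iff.mpr hfm_ne
    -- the function h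
    set hfun : ℂ → ℝ := fun x => Real.log (lam (f x)) + Real.log (‖deriv f x‖)
      + Real.log (R^2 - Complex.normSq (x - z₀)) with hh_def
    have hcont_d : ContinuousAt (deriv f) zm := hd_entire.continuous.continuousAt
    have hev_ne : ∀ᶠ x in 𝓝 zm, deriv f x ≠ 0 := hcont_d.eventually_ne hfm_ne
    have hev_s : ∀ᶠ x in 𝓝 zm, 0 < R^2 - Complex.normSq (x - z₀) := by
      have hc2 : ContinuousAt (fun x : ℂ => R^2 - Complex.normSq (x - z₀)) zm :=
        (continuous_const.sub
          (Complex.continuous_normSq.comp (continuous_id.sub continuous_const))).continuousAt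
      exact hc2.eventually (eventually_gt_nhds hs_pos)
    have hev_ball : ∀ᶠ x in 𝓝 zm, x ∈ Metric.closedBall z₀ R := by
      have hzm_ball : zm ∈ Metric.ball z₀ R := by
        rw [Metric.mem_ball]
        rcases lt_or_eq_of_le (Metric.mem_closedBall.1 hzm_mem) with h | h
        · exact h
        · exfalso
          have : Complex.normSq (zm - z₀) = R^2 := by
            rw [Complex.normSq_eq_norm_sq, ← Complex.dist_eq, h]
          linarith
      exact Filter.mem_of_superset (Metric.isOpen_ball.mem_nhds hzm_ball)
        Metric.ball_subset_closedBall
    have hlog_eq : ∀ y : ℂ, deriv f y ≠ 0 → 0 < R^2 - Complex.normSq (y - z₀) →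
        hfun y = Real.log (W y) := by
      intro y hy1 hy2
      rw [hh_def, hW_def]
      have ha : lam (f y) ≠ 0 := ne_of_gt (hpos _ (hmaps y))
      have hb : ‖deriv f y‖ ≠ 0 := norm_ne_zero_iff.mpr hy1
      rw [Real.log_mul (mul_ne_zero ha hb) (ne_of_gt hy2), Real.log_mul ha hb]
    have hmax_h : IsLocalMax hfun zm := by
      filter_upwards [hev_ne, hev_s, hev_ball] with x h1 h2 h3
      have hWx_pos : 0 < W x :=
        mul_pos (mul_pos (hpos _ (hmaps x)) (norm_pos_iff.mpr h1)) h2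
      calc hfun x = Real.log (W x) := hlog_eq x h1 h2
        _ ≤ Real.log (W zm) := Real.log_le_log hWx_pos (hzm_max h3)
        _ = hfun zm := (hlog_eq zm hfm_ne hs_pos).symm
    -- regularity of the three pieces at zm
    have hfC : ContDiffAt ℝ 2 f zm := ((hf.analyticAt zm).contDiffAt).restrict_scalars ℝ
    have hlamC : ContDiffAt ℝ 2 lam (f zm) := hC2.contDiffAt (hG.mem_nhds (hmaps zm))
    have hp1 : ContDiffAt ℝ 2 (fun x => Real.log (lam (f x))) zm :=
      ((Real.contDiffAt_log (n := 2)).2 (ne_of_gt hlam_m)).comp (g := Real.log) zm (hlamC.comp zm hfC)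
    obtain ⟨c, hc_def⟩ : ∃ c, c = deriv f zm := ⟨_, rfl⟩
    have hc_ne : c ≠ 0 := hc_def ▸ hfm_ne
    have hdiv1 : deriv f zm / c = 1 := by rw [hc_def]; exact div_self hfm_ne
    set gbr : ℂ → ℂ :=
      fun x => Complex.log (deriv f x / c) + (Real.log (‖c‖) : ℂ) with hg_def
    have hev_slit : ∀ᶠ x in 𝓝 zm, deriv f x / c ∈ Complex.slitPlane := by
      have hccont : ContinuousAt (fun x => deriv f x / c) zm := hcont_d.div_const c
      exact hccont.eventually_mem (Complex.isOpen_slitPlane.mem_nhds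
        (by rw [hdiv1]; exact Complex.one_mem_slitPlane))
    have hev_gbr_diff : ∀ᶠ x in 𝓝 zm, DifferentiableAt ℂ gbr x := by
      filter_upwards [hev_slit] with x hx
      exact ((Complex.differentiableAt_log hx).comp x ((hd_entire x).div_const c)).add_const _
    have heq2 : (fun x => Real.log (‖deriv f x‖)) =ᶠ[𝓝 zm] fun x => (gbr x).re := by
      filter_upwards [hev_ne] with x h1
      have hb : ‖deriv f x‖ ≠ 0 := norm_ne_zero_iff.mpr h1
      have hcb : ‖c‖ ≠ 0 := norm_ne_zero_iff.mpr hc_ne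
      simp only [hg_def, Complex.add_re, Complex.log_re, Complex.ofReal_re]
      rw [norm_div, Real.log_div hb hcb]
      ring
    have hgbrC : ContDiffAt ℝ 2 (fun x => (gbr x).re) zm := by
      have hdC : ContDiffAt ℂ 2 (deriv f) zm := (hd_entire.analyticAt zm).contDiffAt
      have h1 : ContDiffAt ℂ 2 gbr zm := by
        apply ContDiffAt.add _ contDiffAt_const
        exact (Complex.contDiffAt_log (by rw [hdiv1]; exact Complex.one_mem_slitPlane)).comp zm
          (hdC.div_const c)
      exact (Complex.reCLM.contDiff.contDiffAt).comp zm (h1.restrict_scalars ℝ)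
    have hp2 : ContDiffAt ℝ 2 (fun x => Real.log (‖deriv f x‖)) zm :=
      hgbrC.congr_of_eventuallyEq heq2
    have hnormSqC : ContDiff ℝ 2 (fun x : ℂ => R^2 - Complex.normSq (x - z₀)) := by
      have h1 : ContDiff ℝ 2 (fun x : ℂ => Complex.normSq x) := by
        have e : (fun x : ℂ => Complex.normSq x) = fun x : ℂ => x.re*x.re + x.im*x.im := by
          funext x; exact Complex.normSq_apply x
        rw [e]
        exact (Complex.reCLM.contDiff.mul Complex.reCLM.contDiff).add
          (Complex.imCLM.contDiff.mul Complex.imCLM.contDiff)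
      exact contDiff_const.sub (h1.comp (contDiff_id.sub contDiff_const))
    have hp3 : ContDiffAt ℝ 2 (fun x => Real.log (R^2 - Complex.normSq (x - z₀))) zm :=
      ((Real.contDiffAt_log (n := 2)).2 (ne_of_gt hs_pos)).comp (g := Real.log) zm hnormSqC.contDiffAt
    have hhC : ContDiffAt ℝ 2 hfun zm := (hp1.add hp2).add hp3
    have hlap_le : lap hfun zm ≤ 0 := lap_nonpos_of_isLocalMax hhC hmax_h
    have e2 := lap_add (fun x => Real.log (lam (f x)))
      (fun x => Real.log (‖deriv f x‖)) zm hp1 hp2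
    have e1 := lap_add
      (fun x => Real.log (lam (f x)) + Real.log (‖deriv f x‖))
      (fun x => Real.log (R^2 - Complex.normSq (x - z₀))) zm (hp1.add hp2) hp3
    have hdecomp : lap hfun zm
        = lap (fun x => Real.log (lam (f x))) zm
          + lap (fun x => Real.log (‖deriv f x‖)) zm
          + lap (fun x => Real.log (R^2 - Complex.normSq (x - z₀))) zm := by
      rw [hh_def]
      exact e1.trans (by rw [e2])
    have hL1 : lap (fun x => Real.log (lam (f x))) zm
        = Complex.normSq (deriv f zm) * lap (fun w => Real.log (lam w)) (f zm) := by
      have hu : ContDiffAt ℝ 2 (fun w => Real.log (lam w)) (f zm) :=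
        (Real.contDiffAt_log.2 (ne_of_gt hlam_m)).comp _ hlamC
      exact lap_comp_holo (fun w => Real.log (lam w)) f zm
        (Eventually.of_forall fun w => hf w) hu
    have hL2 : lap (fun x => Real.log (‖deriv f x‖)) zm = 0 := by
      rw [lap_congr heq2]
      have hu : ContDiffAt ℝ 2 (fun z : ℂ => z.re) (gbr zm) :=
        Complex.reCLM.contDiff.contDiffAt
      rw [lap_comp_holo (fun z : ℂ => z.re) gbr zm hev_gbr_diff hu, lap_re, mul_zero]
    obtain ⟨a, ha_def⟩ : ∃ a, a = (zm - z₀).re := ⟨_, rfl⟩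
    obtain ⟨b, hb_def⟩ : ∃ b, b = (zm - z₀).im := ⟨_, rfl⟩
    obtain ⟨sv, hsv_def⟩ : ∃ s, s = R^2 - Complex.normSq (zm - z₀) := ⟨_, rfl⟩
    have hsv_pos : 0 < sv := hsv_def ▸ hs_pos
    have hsv_ab : sv = R^2 - (a^2 + b^2) := by
      rw [hsv_def, ha_def, hb_def, Complex.normSq_apply]; ring
    have hL3 : lap (fun x => Real.log (R^2 - Complex.normSq (x - z₀))) zm
        = (-2/sv - 4*a^2/sv^2) + (-2/sv - 4*b^2/sv^2) := by
      simp only [lap]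
      have d1 : (fun t : ℝ => Real.log (R^2 - Complex.normSq (zm + (t:ℂ) - z₀)))
          = fun t : ℝ => Real.log ((R^2 - b^2) - (a + t)^2) := by
        funext t; congr 1
        rw [ha_def, hb_def]
        simp [Complex.normSq_apply]
        ring
      have d2 : (fun t : ℝ => Real.log (R^2 - Complex.normSq (zm + (t:ℂ)*Complex.I - z₀)))
          = fun t : ℝ => Real.log ((R^2 - a^2) - (b + t)^2) := by
        funext t; congr 1
        rw [ha_def, hb_def]
        simp [Complex.normSq_apply]
        ring
      have hs1 : (0:ℝ) < (R^2 - b^2) - a^2 := by rw [hsv_ab] at hsv_pos; linarith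
      have hs2 : (0:ℝ) < (R^2 - a^2) - b^2 := by rw [hsv_ab] at hsv_pos; linarith
      rw [d1, d2, log_line_deriv2 _ _ hs1, log_line_deriv2 _ _ hs2]
      have r1 : (R^2 - b^2) - a^2 = sv := by rw [hsv_ab]; ring
      have r2 : (R^2 - a^2) - b^2 = sv := by rw [hsv_ab]; ring
      rw [r1, r2]
    -- combine everything
    have hcurv_m := hcurv (f zm) (hmaps zm)
    have hnq_nonneg : 0 ≤ Complex.normSq (deriv f zm) := Complex.normSq_nonneg _
    have hbound : Complex.normSq (deriv f zm) * (lam (f zm))^2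
        ≤ 4/sv + 4*(a^2+b^2)/sv^2 := by
      have h1 : Complex.normSq (deriv f zm) * (lam (f zm))^2
          ≤ Complex.normSq (deriv f zm) * lap (fun w => Real.log (lam w)) (f zm) :=
        mul_le_mul_of_nonneg_left hcurv_m hnq_nonneg
      have h2 : lap (fun x => Real.log (lam (f x))) zm
          + lap (fun x => Real.log (‖deriv f x‖)) zm
          + lap (fun x => Real.log (R^2 - Complex.normSq (x - z₀))) zm ≤ 0 := by
        rw [← hdecomp]; exact hlap_le
      rw [hL1, hL2, hL3] at h2
      have : 4/sv + 4*(a^2+b^2)/sv^2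
          = -((-2/sv - 4*a^2/sv^2) + (-2/sv - 4*b^2/sv^2)) := by ring
      rw [this]
      linarith
    have hsv_ne : sv ≠ 0 := ne_of_gt hsv_pos
    have hclear : Complex.normSq (deriv f zm) * (lam (f zm))^2 * sv^2 ≤ 4*R^2 := by
      have hmul := mul_le_mul_of_nonneg_right hbound (sq_nonneg sv)
      have e3 : (4/sv + 4*(a^2+b^2)/sv^2) * sv^2 = 4*sv + 4*(a^2+b^2) := by
        field_simp
      rw [e3] at hmul
      rw [hsv_ab] at hmul
      nlinarith [hmul]
    have hW_eq : W zm = lam (f zm) * ‖deriv f zm‖ * sv := by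
      rw [hW_def, hsv_def]
    have hW_sq : (W zm)^2 ≤ 4*R^2 := by
      have e4 : (W zm)^2
          = Complex.normSq (deriv f zm) * (lam (f zm))^2 * sv^2 := by
        rw [hW_eq, ← Complex.sq_norm]
        ring
      rw [e4]
      exact hclear
    nlinarith [hgt, h2R, hW_sq]
  -- Conclusion from the claim
  obtain ⟨c₀, hc₀_def⟩ : ∃ c, c = lam (f z₀) * ‖deriv f z₀‖ := ⟨_, rfl⟩
  have hc₀ : 0 < c₀ := hc₀_def ▸ mul_pos (hpos _ (hmaps z₀)) (norm_pos_iff.mpr hz₀)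
  have hkey : ∀ R : ℝ, 0 < R → c₀ * R^2 ≤ 2*R := by
    intro R hR
    have := claim R hR z₀ (Metric.mem_closedBall_self hR.le)
    rw [hc₀_def]
    simpa using this
  have hne : c₀ ≠ 0 := ne_of_gt hc₀
  have hr : (0:ℝ) < 4/c₀ := by positivity
  have e : c₀ * (4/c₀) = 4 := by field_simp
  have h4 := hkey (4/c₀) hr
  rw [pow_two, ← mul_assoc, e] at h4
  linarith
end

section
/- There exists ε > 0 such that τ(z) := ε · √(1+|z|^{1/3})/|z|^{5/6} · √(1+|z-1|^{1/3})/|z-1|^{5/6} defines a regular conformal metric on the twice-punctured plane ℂ∖{0,1} with Gauss curvature ≤ -1, i.e., Δ(log τ)(z) ≥ τ(z)² for all z ∈ ℂ∖{0,1}. -/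
/-- The density of the Minda–Schober metric on the twice-punctured plane. -/
noncomputable def mindaSchober (ε : ℝ) (z : ℂ) : ℝ :=
  ε * (Real.sqrt (1 + ‖z‖ ^ ((1 : ℝ) / 3)) / ‖z‖ ^ ((5 : ℝ) / 6)) *
    (Real.sqrt (1 + ‖z - 1‖ ^ ((1 : ℝ) / 3)) / ‖z - 1‖ ^ ((5 : ℝ) / 6))

/-! ### Auxiliary radial functions -/

noncomputable def phi (q : ℝ) : ℝ :=
  (1/2) * Real.log (1 + q ^ ((1:ℝ)/6)) - (5/12) * Real.log q
noncomputable def phi' (q : ℝ) : ℝ :=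
  ((1/6) * q ^ ((-5:ℝ)/6)) / (1 + q ^ ((1:ℝ)/6)) / 2 - (5/12) / q
noncomputable def phi'' (q : ℝ) : ℝ :=
  (((1/6) * ((-5:ℝ)/6) * q ^ ((-11:ℝ)/6)) * (1 + q ^ ((1:ℝ)/6))
      - ((1/6) * q ^ ((-5:ℝ)/6)) * ((1/6) * q ^ ((-5:ℝ)/6))) / (1 + q ^ ((1:ℝ)/6))^2 / 2
    + (5/12) / q ^ 2

/-- `lam r` is the value of the Laplacian of `log (√(1+r^{1/3})/r^{5/6})`. -/
noncomputable def lam (r : ℝ) : ℝ := 1/(18*(1+r^((1:ℝ)/3))^2 * r^((5:ℝ)/3))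

lemma one_add_rpow_pos {q : ℝ} (hq : 0 < q) : 0 < 1 + q ^ ((1:ℝ)/6) := by positivity

lemma hasDerivAt_phi {q : ℝ} (hq : 0 < q) : HasDerivAt phi (phi' q) q := by
  have h1 : HasDerivAt (fun x : ℝ => x ^ ((1:ℝ)/6)) ((1/6) * q ^ ((1:ℝ)/6 - 1)) q :=
    Real.hasDerivAt_rpow_const (Or.inl hq.ne')
  have h1' : ((1:ℝ)/6 - 1) = (-5:ℝ)/6 := by norm_num
  rw [h1'] at h1
  have h2 : HasDerivAt (fun x : ℝ => 1 + x ^ ((1:ℝ)/6)) ((1/6) * q ^ ((-5:ℝ)/6)) q :=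
    h1.const_add 1
  have h3 := (h2.log (one_add_rpow_pos hq).ne')
  have h4 : HasDerivAt Real.log (1/q) q := by
    simpa using Real.hasDerivAt_log hq.ne'
  have := ((h3.const_mul (1/2:ℝ)).sub ((h4.const_mul (5/12:ℝ))))
  refine this.congr_deriv ?_
  unfold phi'
  field_simp

lemma hasDerivAt_phi' {q : ℝ} (hq : 0 < q) : HasDerivAt phi' (phi'' q) q := by
  have hne := (one_add_rpow_pos hq).ne'
  have h1 : HasDerivAt (fun x : ℝ => (1/6) * x ^ ((-5:ℝ)/6)) ((1/6) * (((-5:ℝ)/6) * q ^ ((-11:ℝ)/6))) q := by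
    have := (Real.hasDerivAt_rpow_const (x := q) (p := (-5:ℝ)/6) (Or.inl hq.ne')).const_mul (1/6:ℝ)
    refine this.congr_deriv ?_
    norm_num
  have h2 : HasDerivAt (fun x : ℝ => 1 + x ^ ((1:ℝ)/6)) ((1/6) * q ^ ((-5:ℝ)/6)) q := by
    have := (Real.hasDerivAt_rpow_const (x := q) (p := (1:ℝ)/6) (Or.inl hq.ne')).const_add 1
    refine this.congr_deriv ?_
    norm_num
  have hdiv := h1.div h2 hne
  have hinv : HasDerivAt (fun x : ℝ => (5/12) / x) (-(5/12) / q ^ 2) q := by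
    have := (hasDerivAt_const q (5/12:ℝ)).div (hasDerivAt_id q) hq.ne'
    refine this.congr_deriv ?_
    field_simp
    simp only [id, zero_mul, zero_sub]
    rw [mul_div_assoc, div_self (pow_ne_zero 2 hq.ne'), mul_one]
  have := (hdiv.div_const 2).sub hinv
  refine this.congr_deriv ?_
  unfold phi''
  ring

lemma key_alg {q : ℝ} (hq : 0 < q) :
    4 * q * phi'' q + 4 * phi' q = 1 / (18 * (1 + q ^ ((1:ℝ)/6))^2 * q ^ ((5:ℝ)/6)) := by
  have ha : 0 < q ^ ((1:ℝ)/6) := Real.rpow_pos_of_pos hq _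
  set a := q ^ ((1:ℝ)/6) with hadef
  have h6 : a ^ (6:ℕ) = q := by
    rw [hadef, ← Real.rpow_natCast (q ^ ((1:ℝ)/6)) 6, ← Real.rpow_mul hq.le]; norm_num
  have e1 : q ^ ((-5:ℝ)/6) = 1 / a ^ (5:ℕ) := by
    rw [hadef, ← Real.rpow_natCast (q ^ ((1:ℝ)/6)) 5, ← Real.rpow_mul hq.le]
    rw [show ((-5:ℝ)/6) = -(5/6) by norm_num, Real.rpow_neg hq.le, one_div]
    norm_num
  have e2 : q ^ ((-11:ℝ)/6) = 1 / a ^ (11:ℕ) := by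
    rw [hadef, ← Real.rpow_natCast (q ^ ((1:ℝ)/6)) 11, ← Real.rpow_mul hq.le]
    rw [show ((-11:ℝ)/6) = -(11/6) by norm_num, Real.rpow_neg hq.le, one_div]
    norm_num
  have e3 : q ^ ((5:ℝ)/6) = a ^ (5:ℕ) := by
    rw [hadef, ← Real.rpow_natCast (q ^ ((1:ℝ)/6)) 5, ← Real.rpow_mul hq.le]; norm_num
  unfold phi' phi''
  rw [← hadef, e1, e2, e3, ← h6]
  have h1a : (1:ℝ) + a ≠ 0 := by positivity
  field_simp
  ring

/-! ### Slice derivatives -/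

noncomputable def psi (c y t : ℝ) : ℝ := phi' ((c+t)^2 + y^2) * (2*(c+t))

lemma hasDerivAt_q (c y t : ℝ) : HasDerivAt (fun t : ℝ => (c+t)^2 + y^2) (2*(c+t)) t := by
  have h : HasDerivAt (fun t : ℝ => c + t) 1 t := (hasDerivAt_id t).const_add c
  simpa using ((h.pow 2).add_const (y^2))

lemma hasDerivAt_slice {c y t : ℝ} (h : 0 < (c+t)^2 + y^2) :
    HasDerivAt (fun t : ℝ => phi ((c+t)^2 + y^2)) (psi c y t) t :=
  by have := (hasDerivAt_phi h).comp t (hasDerivAt_q c y t); exact this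

lemma hasDerivAt_psi {c y t : ℝ} (h : 0 < (c+t)^2 + y^2) :
    HasDerivAt (psi c y)
      (phi'' ((c+t)^2+y^2) * (2*(c+t))^2 + phi' ((c+t)^2+y^2) * 2) t := by
  have h1 : HasDerivAt (fun t : ℝ => phi' ((c+t)^2 + y^2)) (phi'' ((c+t)^2+y^2) * (2*(c+t))) t :=
    by have := (hasDerivAt_phi' h).comp t (hasDerivAt_q c y t); exact this
  have h2 : HasDerivAt (fun t : ℝ => 2*(c+t)) 2 t := by
    simpa using ((hasDerivAt_id t).const_add c).const_mul 2
  have := h1.mul h2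
  refine this.congr_deriv ?_
  ring

lemma second_deriv_main {c1 y1 c2 y2 : ℝ} (C : ℝ)
    (h1 : 0 < c1^2 + y1^2) (h2 : 0 < c2^2 + y2^2) :
    iteratedDeriv 2 (fun t : ℝ => C + phi ((c1+t)^2 + y1^2) + phi ((c2+t)^2 + y2^2)) 0
      = (phi'' (c1^2+y1^2) * (2*c1)^2 + phi' (c1^2+y1^2) * 2)
        + (phi'' (c2^2+y2^2) * (2*c2)^2 + phi' (c2^2+y2^2) * 2) := by
  have hS : IsOpen {t : ℝ | 0 < (c1+t)^2 + y1^2 ∧ 0 < (c2+t)^2 + y2^2} := by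
    have c1' : Continuous fun t : ℝ => (c1+t)^2 + y1^2 := by continuity
    have c2' : Continuous fun t : ℝ => (c2+t)^2 + y2^2 := by continuity
    exact (isOpen_lt continuous_const c1').inter (isOpen_lt continuous_const c2')
  have h0 : (0:ℝ) ∈ {t : ℝ | 0 < (c1+t)^2 + y1^2 ∧ 0 < (c2+t)^2 + y2^2} := by
    simpa using ⟨h1, h2⟩
  have hev : deriv (fun t : ℝ => C + phi ((c1+t)^2 + y1^2) + phi ((c2+t)^2 + y2^2))
      =ᶠ[nhds 0] fun t => psi c1 y1 t + psi c2 y2 t := by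
    filter_upwards [hS.mem_nhds h0] with t ht
    exact (((hasDerivAt_slice ht.1).const_add C).add (hasDerivAt_slice ht.2)).deriv
  have hd2 : HasDerivAt (fun t => psi c1 y1 t + psi c2 y2 t)
      ((phi'' ((c1+0)^2+y1^2) * (2*(c1+0))^2 + phi' ((c1+0)^2+y1^2) * 2)
        + (phi'' ((c2+0)^2+y2^2) * (2*(c2+0))^2 + phi' ((c2+0)^2+y2^2) * 2)) 0 := by
    exact (hasDerivAt_psi (by simpa using h1)).add (hasDerivAt_psi (by simpa using h2))
  rw [show (2:ℕ) = 1 + 1 from rfl, iteratedDeriv_succ, iteratedDeriv_one]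
  rw [hev.deriv_eq]
  simpa using hd2.deriv

lemma iteratedDeriv_two_congr {f g : ℝ → ℝ} (h : f =ᶠ[nhds (0:ℝ)] g) :
    iteratedDeriv 2 f 0 = iteratedDeriv 2 g 0 := by
  rw [show (2:ℕ) = 1 + 1 from rfl, iteratedDeriv_succ, iteratedDeriv_one,
    iteratedDeriv_succ, iteratedDeriv_one]
  exact (h.deriv).deriv_eq

/-! ### Bridges between `mindaSchober` and the radial functions -/

lemma sq_rpow_sixth {r : ℝ} (hr : 0 < r) : (r^2) ^ ((1:ℝ)/6) = r ^ ((1:ℝ)/3) := by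
  have h2 : r ^ (2:ℕ) = r ^ (2:ℝ) := by
    rw [← Real.rpow_natCast r 2]; norm_num
  rw [h2, ← Real.rpow_mul hr.le]; norm_num

lemma sq_rpow_five_sixth {r : ℝ} (hr : 0 < r) : (r^2) ^ ((5:ℝ)/6) = r ^ ((5:ℝ)/3) := by
  have h2 : r ^ (2:ℕ) = r ^ (2:ℝ) := by
    rw [← Real.rpow_natCast r 2]; norm_num
  rw [h2, ← Real.rpow_mul hr.le]; norm_num

lemma log_factor {r : ℝ} (hr : 0 < r) :
    Real.log (Real.sqrt (1 + r ^ ((1:ℝ)/3)) / r ^ ((5:ℝ)/6)) = phi (r^2) := by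
  have hs : (0:ℝ) < 1 + r ^ ((1:ℝ)/3) := by positivity
  unfold phi
  rw [sq_rpow_sixth hr, Real.log_div (Real.sqrt_ne_zero'.mpr hs)
      (Real.rpow_pos_of_pos hr _).ne', Real.log_sqrt hs.le, Real.log_rpow hr,
    Real.log_pow]
  push_cast
  ring

lemma key_alg' {r : ℝ} (hr : 0 < r) :
    4 * (r^2) * phi'' (r^2) + 4 * phi' (r^2) = lam r := by
  rw [key_alg (by positivity : (0:ℝ) < r^2), lam, sq_rpow_sixth hr, sq_rpow_five_sixth hr]

lemma norm_sq_complex (w : ℂ) : ‖w‖^2 = w.re^2 + w.im^2 := by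
  rw [Complex.sq_norm, Complex.normSq_apply]; ring

lemma log_minda {ε : ℝ} (hε : 0 < ε) {w : ℂ} (h0 : w ≠ 0) (h1 : w ≠ 1) :
    Real.log (mindaSchober ε w) = Real.log ε + phi (‖w‖^2) + phi (‖w-1‖^2) := by
  have hr : (0:ℝ) < ‖w‖ := norm_pos_iff.mpr h0
  have hs : (0:ℝ) < ‖w - 1‖ := norm_pos_iff.mpr (sub_ne_zero.mpr h1)
  have hA : (0:ℝ) < Real.sqrt (1 + ‖w‖ ^ ((1:ℝ)/3)) / ‖w‖ ^ ((5:ℝ)/6) := by positivity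
  have hB : (0:ℝ) < Real.sqrt (1 + ‖w-1‖ ^ ((1:ℝ)/3)) / ‖w-1‖ ^ ((5:ℝ)/6) := by positivity
  rw [mindaSchober, Real.log_mul (by positivity) hB.ne', Real.log_mul hε.ne' hA.ne',
    log_factor hr, log_factor hs]

/-! ### The Laplacian computation -/

lemma lap_log_minda {ε : ℝ} (hε : 0 < ε) {z : ℂ} (h0 : z ≠ 0) (h1 : z ≠ 1) :
    lap (fun w => Real.log (mindaSchober ε w)) z = lam ‖z‖ + lam ‖z-1‖ := by
  have hr : (0:ℝ) < ‖z‖ := norm_pos_iff.mpr h0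
  have hs : (0:ℝ) < ‖z - 1‖ := norm_pos_iff.mpr (sub_ne_zero.mpr h1)
  have hq1 : ‖z‖^2 = z.re^2 + z.im^2 := norm_sq_complex z
  have hq2 : ‖z-1‖^2 = (z.re-1)^2 + z.im^2 := by
    rw [norm_sq_complex]; simp
  have hq1' : 0 < z.re^2 + z.im^2 := by rw [← hq1]; positivity
  have hq2' : 0 < (z.re-1)^2 + z.im^2 := by rw [← hq2]; positivity
  have hUopen : IsOpen {w : ℂ | w ≠ 0 ∧ w ≠ 1} := by
    exact (isOpen_compl_singleton).inter (isOpen_compl_singleton)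
  -- slice along the real direction
  have hev1 : (fun t : ℝ => Real.log (mindaSchober ε (z + (t:ℂ))))
      =ᶠ[nhds 0] fun t : ℝ => Real.log ε + phi ((z.re+t)^2 + z.im^2)
        + phi (((z.re-1)+t)^2 + z.im^2) := by
    have hc : Continuous fun t : ℝ => z + (t:ℂ) := by continuity
    have hmem : ∀ᶠ t : ℝ in nhds 0, (z + (t:ℂ)) ∈ {w : ℂ | w ≠ 0 ∧ w ≠ 1} := by
      have := hc.continuousAt (x := (0:ℝ))
      apply this.eventually_mem (hUopen.mem_nhds ?_)
      simpa using ⟨h0, h1⟩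
    filter_upwards [hmem] with t ht
    rw [log_minda hε ht.1 ht.2, norm_sq_complex, norm_sq_complex]
    simp only [Complex.add_re, Complex.add_im, Complex.ofReal_re, Complex.ofReal_im,
      Complex.sub_re, Complex.sub_im, Complex.one_re, Complex.one_im]
    ring_nf
  have hev2 : (fun t : ℝ => Real.log (mindaSchober ε (z + (t:ℂ) * Complex.I)))
      =ᶠ[nhds 0] fun t : ℝ => Real.log ε + phi ((z.im+t)^2 + z.re^2)
        + phi ((z.im+t)^2 + (z.re-1)^2) := by
    have hc : Continuous fun t : ℝ => z + (t:ℂ) * Complex.I := by continuity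
    have hmem : ∀ᶠ t : ℝ in nhds 0, (z + (t:ℂ) * Complex.I) ∈ {w : ℂ | w ≠ 0 ∧ w ≠ 1} := by
      have := hc.continuousAt (x := (0:ℝ))
      apply this.eventually_mem (hUopen.mem_nhds ?_)
      simpa using ⟨h0, h1⟩
    filter_upwards [hmem] with t ht
    rw [log_minda hε ht.1 ht.2, norm_sq_complex, norm_sq_complex]
    simp only [Complex.add_re, Complex.add_im, Complex.ofReal_re, Complex.ofReal_im,
      Complex.sub_re, Complex.sub_im, Complex.one_re, Complex.one_im, Complex.mul_re,
      Complex.mul_im, Complex.I_re, Complex.I_im]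
    ring_nf
  have e1 := second_deriv_main (c1 := z.re) (y1 := z.im) (c2 := z.re - 1) (y2 := z.im)
    (Real.log ε) hq1' hq2'
  have e2 := second_deriv_main (c1 := z.im) (y1 := z.re) (c2 := z.im) (y2 := z.re - 1)
    (Real.log ε) (by linarith [hq1']) (by linarith [hq2'])
  rw [lap, iteratedDeriv_two_congr hev1, iteratedDeriv_two_congr hev2, e1, e2]
  have hz1 : z.im^2 + z.re^2 = ‖z‖^2 := by rw [hq1]; ring
  have hz2 : z.im^2 + (z.re-1)^2 = ‖z-1‖^2 := by rw [hq2]; ring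
  rw [hz1, hz2, ← hq1, ← hq2]
  have k1 := key_alg' hr
  have k2 := key_alg' hs
  linear_combination k1 + k2 - 4*phi'' (‖z‖^2)*hq1 - 4*phi'' (‖z-1‖^2)*hq2

/-! ### The inequality -/

lemma core_ineq {a b : ℝ} (ha : 0 < a) (hb : 0 < b) (hab : a ≤ b) (hb2 : 1/2 ≤ b) :
    ((1:ℝ)/100)^2 * ((1+a)/a^5) * ((1+b)/b^5) ≤ 1/(18*(1+a)^2*a^5) := by
  have e : ((1:ℝ)/100)^2 * ((1+a)/a^5) * ((1+b)/b^5)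
      = ((1+a)*(1+b))/(10000*(a^5*b^5)) := by ring
  rw [e, div_le_div_iff₀ (by positivity) (by positivity)]
  have h3 : 1 + b ≤ 3 * b := by linarith
  have k1 : (1+a)^3 ≤ (1+b)^3 := pow_le_pow_left₀ (by positivity) (by linarith) 3
  have k2 : (1+b)^4 ≤ 81*b^4 := by
    have := pow_le_pow_left₀ (by positivity : (0:ℝ) ≤ 1+b) h3 4
    nlinarith [this]
  have k3 : (0:ℝ) ≤ b^4*(2*b-1) :=
    mul_nonneg (pow_nonneg hb.le 4) (by linarith)
  have hkey : 18*(1+a)^3*(1+b) ≤ 10000*b^5 := by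
    nlinarith [mul_le_mul_of_nonneg_right k1 (by positivity : (0:ℝ) ≤ 1+b), k2, k3]
  nlinarith [mul_le_mul_of_nonneg_right hkey (pow_nonneg ha.le 5)]

lemma main_ineq {a b : ℝ} (ha : 0 < a) (hb : 0 < b) (hab : 1 ≤ a^3 + b^3) :
    ((1:ℝ)/100)^2 * ((1+a)/a^5) * ((1+b)/b^5)
      ≤ 1/(18*(1+a)^2*a^5) + 1/(18*(1+b)^2*b^5) := by
  rcases le_total a b with h | h
  · have hb2 : (1:ℝ)/2 ≤ b := by
      by_contra hc
      push_neg at hc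
      have h1 : a^3 ≤ b^3 := pow_le_pow_left₀ ha.le h 3
      have h2 : b^3 < (1/2:ℝ)^3 := pow_lt_pow_left₀ hc hb.le (by norm_num)
      norm_num at h2
      linarith
    have := core_ineq ha hb h hb2
    have hpos : (0:ℝ) < 1/(18*(1+b)^2*b^5) := by positivity
    linarith
  · have ha2 : (1:ℝ)/2 ≤ a := by
      by_contra hc
      push_neg at hc
      have h1 : b^3 ≤ a^3 := pow_le_pow_left₀ hb.le h 3
      have h2 : a^3 < (1/2:ℝ)^3 := pow_lt_pow_left₀ hc ha.le (by norm_num)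
      norm_num at h2
      linarith
    have := core_ineq hb ha h ha2
    have hpos : (0:ℝ) < 1/(18*(1+a)^2*a^5) := by positivity
    have hcomm : ((1:ℝ)/100)^2 * ((1+a)/a^5) * ((1+b)/b^5)
        = ((1:ℝ)/100)^2 * ((1+b)/b^5) * ((1+a)/a^5) := by ring
    rw [hcomm]
    linarith

lemma rpow_third_pow5 {r : ℝ} (hr : 0 < r) :
    (r ^ ((1:ℝ)/3)) ^ (5:ℕ) = r ^ ((5:ℝ)/3) := by
  rw [← Real.rpow_natCast (r ^ ((1:ℝ)/3)) 5, ← Real.rpow_mul hr.le]; norm_num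

lemma rpow_third_cube {r : ℝ} (hr : 0 < r) :
    (r ^ ((1:ℝ)/3)) ^ (3:ℕ) = r := by
  rw [← Real.rpow_natCast (r ^ ((1:ℝ)/3)) 3, ← Real.rpow_mul hr.le]; norm_num

lemma minda_sq {z : ℂ} (h0 : z ≠ 0) (h1 : z ≠ 1) :
    (mindaSchober (1/100) z)^2
      = ((1:ℝ)/100)^2 * ((1 + ‖z‖ ^ ((1:ℝ)/3))/(‖z‖ ^ ((1:ℝ)/3))^5)
        * ((1 + ‖z-1‖ ^ ((1:ℝ)/3))/(‖z-1‖ ^ ((1:ℝ)/3))^5) := by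
  have hr : (0:ℝ) < ‖z‖ := norm_pos_iff.mpr h0
  have hs : (0:ℝ) < ‖z - 1‖ := norm_pos_iff.mpr (sub_ne_zero.mpr h1)
  have e1 : (‖z‖ ^ ((5:ℝ)/6))^2 = (‖z‖ ^ ((1:ℝ)/3))^5 := by
    rw [← Real.rpow_natCast (‖z‖ ^ ((5:ℝ)/6)) 2, ← Real.rpow_mul hr.le,
      ← Real.rpow_natCast (‖z‖ ^ ((1:ℝ)/3)) 5, ← Real.rpow_mul hr.le]
    norm_num
  have e2 : (‖z-1‖ ^ ((5:ℝ)/6))^2 = (‖z-1‖ ^ ((1:ℝ)/3))^5 := by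
    rw [← Real.rpow_natCast (‖z-1‖ ^ ((5:ℝ)/6)) 2, ← Real.rpow_mul hs.le,
      ← Real.rpow_natCast (‖z-1‖ ^ ((1:ℝ)/3)) 5, ← Real.rpow_mul hs.le]
    norm_num
  have s1 : Real.sqrt (1 + ‖z‖ ^ ((1:ℝ)/3)) ^ 2 = 1 + ‖z‖ ^ ((1:ℝ)/3) :=
    Real.sq_sqrt (by positivity)
  have s2 : Real.sqrt (1 + ‖z-1‖ ^ ((1:ℝ)/3)) ^ 2 = 1 + ‖z-1‖ ^ ((1:ℝ)/3) :=
    Real.sq_sqrt (by positivity)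
  rw [mindaSchober, mul_pow, mul_pow, div_pow, div_pow, div_pow, s1, s2, e1, e2]

/-! ### Smoothness -/

lemma contDiffOn_minda (ε : ℝ) :
    ContDiffOn ℝ 2 (mindaSchober ε) {z : ℂ | z ≠ 0 ∧ z ≠ 1} := by
  intro z hz
  obtain ⟨h0, h1⟩ := hz
  have hr : (0:ℝ) < ‖z‖ := norm_pos_iff.mpr h0
  have hs : (0:ℝ) < ‖z - 1‖ := norm_pos_iff.mpr (sub_ne_zero.mpr h1)
  have hnorm : ContDiffAt ℝ 2 (fun w : ℂ => ‖w‖) z :=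
    ContDiffAt.norm ℝ contDiffAt_id h0
  have hnorm' : ContDiffAt ℝ 2 (fun w : ℂ => ‖w - 1‖) z :=
    ContDiffAt.norm ℝ (contDiffAt_id.sub contDiffAt_const) (sub_ne_zero.mpr h1)
  have hA : ContDiffAt ℝ 2
      (fun w : ℂ => Real.sqrt (1 + ‖w‖ ^ ((1:ℝ)/3)) / ‖w‖ ^ ((5:ℝ)/6)) z := by
    apply ContDiffAt.div
    · exact ((contDiffAt_const.add (hnorm.rpow_const_of_ne hr.ne')).sqrt (by positivity))
    · exact hnorm.rpow_const_of_ne hr.ne'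
    · exact (Real.rpow_pos_of_pos hr _).ne'
  have hB : ContDiffAt ℝ 2
      (fun w : ℂ => Real.sqrt (1 + ‖w - 1‖ ^ ((1:ℝ)/3)) / ‖w - 1‖ ^ ((5:ℝ)/6)) z := by
    apply ContDiffAt.div
    · exact ((contDiffAt_const.add (hnorm'.rpow_const_of_ne hs.ne')).sqrt (by positivity))
    · exact hnorm'.rpow_const_of_ne hs.ne'
    · exact (Real.rpow_pos_of_pos hs _).ne'
  exact (((contDiffAt_const.mul hA).mul hB)).contDiffWithinAt

/-! ### Main theorem -/

/-- For sufficiently small `ε > 0`, the Minda–Schober density defines a regular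
conformal metric with curvature `≤ -1` on the twice-punctured plane `ℂ∖{0,1}`. -/
theorem minda_schober_metric :
    ∃ ε : ℝ, 0 < ε ∧
      (∀ z : ℂ, z ≠ 0 → z ≠ 1 → 0 < mindaSchober ε z) ∧
      ContDiffOn ℝ 2 (mindaSchober ε) {z : ℂ | z ≠ 0 ∧ z ≠ 1} ∧
      (∀ z : ℂ, z ≠ 0 → z ≠ 1 →
        (mindaSchober ε z) ^ 2 ≤ lap (fun w => Real.log (mindaSchober ε w)) z) := by
  refine ⟨1/100, by norm_num, ?_, contDiffOn_minda _, ?_⟩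
  · intro z h0 h1
    have hr : (0:ℝ) < ‖z‖ := norm_pos_iff.mpr h0
    have hs : (0:ℝ) < ‖z - 1‖ := norm_pos_iff.mpr (sub_ne_zero.mpr h1)
    rw [mindaSchober]
    positivity
  · intro z h0 h1
    have hr : (0:ℝ) < ‖z‖ := norm_pos_iff.mpr h0
    have hs : (0:ℝ) < ‖z - 1‖ := norm_pos_iff.mpr (sub_ne_zero.mpr h1)
    rw [lap_log_minda (by norm_num) h0 h1, minda_sq h0 h1]
    have ha : (0:ℝ) < ‖z‖ ^ ((1:ℝ)/3) := Real.rpow_pos_of_pos hr _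
    have hb : (0:ℝ) < ‖z-1‖ ^ ((1:ℝ)/3) := Real.rpow_pos_of_pos hs _
    have hab : 1 ≤ (‖z‖ ^ ((1:ℝ)/3))^3 + (‖z-1‖ ^ ((1:ℝ)/3))^3 := by
      rw [rpow_third_cube hr, rpow_third_cube hs]
      calc (1:ℝ) = ‖z - (z-1)‖ := by norm_num
      _ ≤ ‖z‖ + ‖z-1‖ := norm_sub_le _ _
    have := main_ineq ha hb hab
    rw [lam, lam, ← rpow_third_pow5 hr, ← rpow_third_pow5 hs]
    exact this
end
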